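/- arXiv:1504.03839 — 2 statements merged into one kernel-verified Lean document; each statement's English description precedes it below -/
import Mathlib

section
/- Let k ≥ 4 be an even integer and let r be a real number with r ≤ −√(2+√5). Then there exists a sequence (H_n) of k-uniform hypergraphs and a sequence (λ_n) of real numbers such that for each n, λ_n is an adjacency H-eigenvalue of H_n with λ_n ≤ μ for every adjacency H-eigenvalue μ of H_n (i.e., λ_n is the least adjacency H-eigenvalue of H_n), and λ_n → r as n → ∞. In other words, every real number r ≤ −√(2+√5) is a limit point of the least adjacency H-eigenvalues of k-uniform hypergraphs. -/
open Finset

/-- A `k`-uniform hypergraph with vertices drawn from `ℕ`. -/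
structure UniformHypergraph (k : ℕ) where
  verts : Finset ℕ
  edges : Finset (Finset ℕ)
  subset_verts : ∀ e ∈ edges, e ⊆ verts
  uniform : ∀ e ∈ edges, e.card = k

/-- `lam` is an adjacency H-eigenvalue of the `k`-uniform hypergraph `H`. -/
def UniformHypergraph.IsAdjHEig {k : ℕ} (H : UniformHypergraph k) (lam : ℝ) : Prop :=
  ∃ x : ℕ → ℝ, (∃ v ∈ H.verts, x v ≠ 0) ∧ ∀ v ∈ H.verts,
    lam * x v ^ (k - 1)
      = ∑ e ∈ H.edges.filter (fun e => v ∈ e), ∏ w ∈ e.erase v, x w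

/-!
Write `k = 2t + 4`. The extremal hypergraphs are caterpillars: a loose path whose `i`-th edge
consists of the path vertices `i`, `i + 1` and `2t + 2` fillers, with `c i` pendant edges
(`2t + 3` new vertices each) attached at path vertex `i`. The vector with value `X i` on path
vertex `i`, `√(X i X (i+1) / ρ)` on the fillers of the `i`-th path edge and `X i / ρ` on the
pendant vertices at `i` is an H-eigenvector for `ρ` as soon as `w i = X i ^ (t + 2)` solves
`PathEq`: `(Λ - c i / Λ) w i = w (i - 1) + w (i + 1)` along the path, with `Λ = ρ ^ (t + 2)`.
Giving one vertex of every edge the sign `-1` turns it into an eigenvector for `-ρ` because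
`k - 1` is odd, and comparison with the positive eigenvector shows that no eigenvalue lies
below `-ρ`.

The ratios `w (i+1) / w i` follow `pathRatio`: `u i = Λ - c i / Λ - 1 / u (i-1)`. For `Λ₂ ≥ 4`
a greedy choice of `c` keeps them in `[1/2, 3/4]`; for `Λ₁ < Λ₂` the gap between the two ratio
sequences grows linearly, so at `Λ₁` some ratio becomes nonpositive, and the intermediate value
theorem gives `Λ ∈ [Λ₁, Λ₂]` at which the ratios hit `0` exactly: a finite caterpillar. So
every `ρ ≥ 2` is a limit of such `ρ`, and `-√(2 + √5) ≤ -2`.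
-/

namespace UniformHypergraph

variable {k : ℕ} (H : UniformHypergraph k)

def EigenEq (lam : ℝ) (x : ℕ → ℝ) : Prop :=
  ∀ v ∈ H.verts, lam * x v ^ (k - 1) = ∑ e ∈ H.edges.filter (fun e => v ∈ e), ∏ w ∈ e.erase v, x w

variable {H}

theorem eigenEq_of_forall_mul_pow (hk : k ≠ 0) {P : ℕ → ℝ} {ρ : ℝ} (hP : ∀ v ∈ H.verts, P v ≠ 0)
    (h : ∀ v ∈ H.verts, ρ * P v ^ k = ∑ e ∈ H.edges.filter (fun e => v ∈ e), ∏ w ∈ e, P w) :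
    H.EigenEq ρ P := by
  intro v hv
  apply mul_right_cancel₀ (hP v hv)
  rw [mul_assoc, ← pow_succ, Nat.sub_add_cancel (Nat.one_le_iff_ne_zero.2 hk), h v hv, sum_mul]
  exact sum_congr rfl fun e he => (prod_erase_mul e P (mem_filter.1 he).2).symm

theorem EigenEq.neg_of_signing (hk : Odd (k - 1)) {σ x : ℕ → ℝ} (hσ : ∀ v, σ v = 1 ∨ σ v = -1)
    (hσe : ∀ e ∈ H.edges, ∏ v ∈ e, σ v = -1) {ρ : ℝ} (hx : H.EigenEq ρ x) :
    H.EigenEq (-ρ) (fun v => σ v * x v) := by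
  intro v hv
  have hσv : σ v ^ (k - 1) = σ v := by
    rcases hσ v with h | h <;> simp [h, hk.neg_one_pow]
  have hedge : ∀ e ∈ H.edges.filter (fun e => v ∈ e),
      ∏ w ∈ e.erase v, σ w * x w = -σ v * ∏ w ∈ e.erase v, x w := by
    intro e he
    rw [mem_filter] at he
    have hprod : σ v * ∏ w ∈ e.erase v, σ w = -1 := by
      rw [mul_prod_erase e σ he.2]; exact hσe e he.1
    have : ∏ w ∈ e.erase v, σ w = -σ v := by
      rcases hσ v with h | h <;> rw [h] at hprod ⊢ <;> linarith
    rw [prod_mul_distrib, this]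
  rw [sum_congr rfl hedge, ← mul_sum, ← hx v hv, mul_pow, hσv]
  ring

theorem abs_le_of_eigenEq_of_pos {P : ℕ → ℝ} {ρ μ : ℝ} (hP : ∀ v ∈ H.verts, 0 < P v)
    (hPρ : H.EigenEq ρ P) (hμ : H.IsAdjHEig μ) : |μ| ≤ ρ := by
  obtain ⟨x, ⟨v₀, hv₀, hx₀⟩, hx⟩ := hμ
  obtain ⟨v, hv, hmax⟩ := exists_max_image H.verts (fun v => |x v| / P v) ⟨v₀, hv₀⟩
  set s := |x v| / P v
  have hs : 0 < s := (div_pos (abs_pos.2 hx₀) (hP v₀ hv₀)).trans_le (hmax v₀ hv₀)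
  have hxs : ∀ w ∈ H.verts, |x w| ≤ s * P w := fun w hw =>
    (div_le_iff₀ (hP w hw)).1 (hmax w hw)
  have hxv : |x v| = s * P v := (div_mul_cancel₀ _ (hP v hv).ne').symm
  have key : |μ| * (s * P v) ^ (k - 1) ≤ ρ * (s * P v) ^ (k - 1) := by
    calc |μ| * (s * P v) ^ (k - 1) = |μ * x v ^ (k - 1)| := by rw [abs_mul, abs_pow, hxv]
      _ = |∑ e ∈ H.edges.filter (fun e => v ∈ e), ∏ w ∈ e.erase v, x w| := by rw [hx v hv]
      _ ≤ ∑ e ∈ H.edges.filter (fun e => v ∈ e), ∏ w ∈ e.erase v, s * P w := by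
          refine (abs_sum_le_sum_abs _ _).trans (sum_le_sum fun e he => ?_)
          rw [abs_prod]
          exact prod_le_prod (fun _ _ => abs_nonneg _) fun w hw =>
            hxs w (H.subset_verts e (mem_filter.1 he).1 (mem_of_mem_erase hw))
      _ = s ^ (k - 1) * ∑ e ∈ H.edges.filter (fun e => v ∈ e), ∏ w ∈ e.erase v, P w := by
          rw [mul_sum]
          refine sum_congr rfl fun e he => ?_
          rw [mem_filter] at he
          rw [prod_mul_distrib, prod_const, card_erase_of_mem he.2, H.uniform e he.1]
      _ = ρ * (s * P v) ^ (k - 1) := by rw [← hPρ v hv, mul_pow]; ring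
  exact le_of_mul_le_mul_right key (pow_pos (mul_pos hs (hP v hv)) _)

theorem isLeast_neg_of_signing (hk : Odd (k - 1)) {σ P : ℕ → ℝ} {ρ : ℝ}
    (hσ : ∀ v, σ v = 1 ∨ σ v = -1) (hσe : ∀ e ∈ H.edges, ∏ v ∈ e, σ v = -1)
    (hP : ∀ v ∈ H.verts, 0 < P v) (hPρ : H.EigenEq ρ P) (hne : H.verts.Nonempty) :
    IsLeast {μ | H.IsAdjHEig μ} (-ρ) := by
  obtain ⟨v, hv⟩ := hne
  refine ⟨⟨_, ⟨v, hv, ?_⟩, hPρ.neg_of_signing hk hσ hσe⟩, fun μ hμ => ?_⟩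
  · rcases hσ v with h | h <;> simp [h, (hP v hv).ne']
  · exact neg_le_of_abs_le (abs_le_of_eigenEq_of_pos hP hPρ hμ)

end UniformHypergraph

lemma sum_range_ite_eq_or_eq_succ {m n : ℕ} (hm : m ≤ n) (g : ℕ → ℝ) :
    ∑ i ∈ range n, (if m = i ∨ m = i + 1 then g i else 0)
      = (if m = 0 then 0 else g (m - 1)) + (if m < n then g m else 0) := by
  have hsplit : ∀ i, (if m = i ∨ m = i + 1 then g i else 0)
      = (if m = i + 1 then g i else 0) + (if m = i then g i else 0) := by
    intro i; split_ifs <;> first | (exfalso; omega) | simp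
  rw [sum_congr rfl fun i _ => hsplit i, sum_add_distrib, sum_ite_eq]
  congr 1
  · cases m with
    | zero => simp
    | succ m => simp [sum_ite_eq, show m < n by omega]
  · simp [mem_range]

def PathEq (n : ℕ) (c : ℕ → ℕ) (Λ : ℝ) (w : ℕ → ℝ) : Prop :=
  ∀ j ≤ n, (Λ - c j / Λ) * w j = (if j = 0 then 0 else w (j - 1)) + (if j < n then w (j + 1) else 0)

lemma PathEq.congr {n : ℕ} {c : ℕ → ℕ} {Λ : ℝ} {w w' : ℕ → ℝ} (h : PathEq n c Λ w)
    (hw : ∀ j ≤ n, w' j = w j) : PathEq n c Λ w' := by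
  intro j hj
  rw [hw j hj, h j hj]
  congr 1
  · split_ifs
    · rfl
    · exact (hw _ (by omega)).symm
  · split_ifs with hjn
    · exact (hw _ hjn).symm
    · rfl

noncomputable def pathRatio (Λ : ℝ) (c : ℕ → ℕ) : ℕ → ℝ
  | 0 => Λ - c 0 / Λ
  | i + 1 => Λ - c (i + 1) / Λ - 1 / pathRatio Λ c i

section PathRatio

variable {Λ : ℝ} {c : ℕ → ℕ}

lemma pathEq_prod_pathRatio (hΛ : Λ ≠ 0) {n : ℕ} (hn : pathRatio Λ c n = 0)
    (hpos : ∀ j < n, 0 < pathRatio Λ c j) :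
    PathEq n c Λ fun j => ∏ i ∈ range j, pathRatio Λ c i := by
  have hstep : ∀ j ≤ n, (Λ - c j / Λ) * ∏ i ∈ range j, pathRatio Λ c i
      = (if j = 0 then 0 else ∏ i ∈ range (j - 1), pathRatio Λ c i)
        + pathRatio Λ c j * ∏ i ∈ range j, pathRatio Λ c i := by
    rintro (_ | j) hj
    · simp [pathRatio]
    · have hu : pathRatio Λ c j ≠ 0 := (hpos j (by omega)).ne'
      simp only [pathRatio, prod_range_succ, Nat.add_sub_cancel, if_neg j.succ_ne_zero]
      field_simp
      ring
  intro j hj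
  rw [hstep j hj]
  congr 1
  split_ifs with hjn
  · exact (prod_range_succ_comm _ _).symm
  · rw [show j = n by omega, hn, zero_mul]

lemma pathRatio_sub_le {Λ₁ Λ₂ : ℝ} (h₁ : 0 < Λ₁) (h₁₂ : Λ₁ ≤ Λ₂) {i : ℕ}
    (hpos : ∀ j < i, 0 < pathRatio Λ₁ c j) :
    Λ₂ - Λ₁ ≤ pathRatio Λ₂ c i - pathRatio Λ₁ c i := by
  induction i with
  | zero =>
    have : (c 0 : ℝ) / Λ₂ ≤ c 0 / Λ₁ := div_le_div_of_nonneg_left (Nat.cast_nonneg _) h₁ h₁₂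
    simp only [pathRatio]
    linarith
  | succ i ih =>
    have hd := ih fun j hj => hpos j (by omega)
    have hu₁ : 0 < pathRatio Λ₁ c i := hpos i (by omega)
    have hc : (c (i + 1) : ℝ) / Λ₂ ≤ c (i + 1) / Λ₁ :=
      div_le_div_of_nonneg_left (Nat.cast_nonneg _) h₁ h₁₂
    have hinv : 1 / pathRatio Λ₂ c i ≤ 1 / pathRatio Λ₁ c i :=
      one_div_le_one_div_of_le hu₁ (by linarith)
    simp only [pathRatio]
    linarith

lemma succ_mul_sub_le_pathRatio_sub {Λ₁ Λ₂ : ℝ} (h₁ : 0 < Λ₁) (h₁₂ : Λ₁ ≤ Λ₂) {i : ℕ}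
    (hpos : ∀ j < i, 0 < pathRatio Λ₁ c j) (hle : ∀ j < i, pathRatio Λ₂ c j ≤ 1) :
    (i + 1) * (Λ₂ - Λ₁) ≤ pathRatio Λ₂ c i - pathRatio Λ₁ c i := by
  induction i with
  | zero => simpa using pathRatio_sub_le h₁ h₁₂ (c := c) (i := 0) (by simp)
  | succ i ih =>
    have hd := ih (fun j hj => hpos j (by omega)) fun j hj => hle j (by omega)
    have hu₁ : 0 < pathRatio Λ₁ c i := hpos i (by omega)
    have hu₂ : pathRatio Λ₂ c i ≤ 1 := hle i (by omega)
    have hδ : 0 ≤ ((i : ℝ) + 1) * (Λ₂ - Λ₁) := by nlinarith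
    have hc : (c (i + 1) : ℝ) / Λ₂ ≤ c (i + 1) / Λ₁ :=
      div_le_div_of_nonneg_left (Nat.cast_nonneg _) h₁ h₁₂
    have hinv : pathRatio Λ₂ c i - pathRatio Λ₁ c i
        ≤ 1 / pathRatio Λ₁ c i - 1 / pathRatio Λ₂ c i := by
      have hprod : pathRatio Λ₁ c i * pathRatio Λ₂ c i ≤ 1 := by nlinarith
      rw [div_sub_div _ _ hu₁.ne' (by linarith), le_div_iff₀ (by nlinarith)]
      nlinarith [mul_le_mul_of_nonneg_left hprod (hδ.trans hd)]
    simp only [pathRatio]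
    push_cast
    linarith

lemma continuousAt_pathRatio (hΛ : Λ ≠ 0) {i : ℕ} (hne : ∀ j < i, pathRatio Λ c j ≠ 0) :
    ContinuousAt (fun Λ => pathRatio Λ c i) Λ := by
  induction i with
  | zero =>
    simp only [pathRatio]
    exact continuousAt_id.sub (continuousAt_const.div continuousAt_id hΛ)
  | succ i ih =>
    simp only [pathRatio]
    exact (continuousAt_id.sub (continuousAt_const.div continuousAt_id hΛ)).sub
      (continuousAt_const.div (ih fun j hj => hne j (by omega)) (hne i (by omega)))

theorem exists_pathRatio_eq_zero {Λ₁ Λ₂ : ℝ} (h₁ : 0 < Λ₁) (h₁₂ : Λ₁ < Λ₂)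
    (hc : ∀ i, pathRatio Λ₂ c i ∈ Set.Ioc 0 1) :
    ∃ Λ ∈ Set.Icc Λ₁ Λ₂, ∃ n, pathRatio Λ c n = 0 ∧ ∀ j < n, 0 < pathRatio Λ c j := by
  have hcrash : ∃ i, pathRatio Λ₁ c i ≤ 0 := by
    by_contra! hpos
    obtain ⟨i, hi⟩ := exists_nat_gt (1 / (Λ₂ - Λ₁))
    have hgap := succ_mul_sub_le_pathRatio_sub h₁ h₁₂.le (fun j _ => hpos j)
      (fun j _ => (hc j).2) (i := i)
    rw [div_lt_iff₀ (by linarith)] at hi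
    nlinarith [hpos i, (hc i).2]
  classical
  set n := Nat.find hcrash
  have hpos₁ : ∀ j < n, 0 < pathRatio Λ₁ c j := fun j hj => not_le.1 (Nat.find_min hcrash hj)
  have hpos : ∀ Λ ∈ Set.Icc Λ₁ Λ₂, ∀ j < n, 0 < pathRatio Λ c j := fun Λ hΛ j hj => by
    have := pathRatio_sub_le h₁ hΛ.1 (i := j) fun j' hj' => hpos₁ j' (by omega)
    linarith [hpos₁ j hj, hΛ.1]
  have hcont : ContinuousOn (fun Λ => pathRatio Λ c n) (Set.Icc Λ₁ Λ₂) := fun Λ hΛ =>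
    (continuousAt_pathRatio (by linarith [hΛ.1]) fun j hj =>
      (hpos Λ hΛ j hj).ne').continuousWithinAt
  obtain ⟨Λ, hΛ, hzero⟩ := intermediate_value_Icc h₁₂.le hcont
    ⟨Nat.find_spec hcrash, (hc n).1.le⟩
  exact ⟨Λ, hΛ, n, hzero, hpos Λ hΛ⟩

noncomputable def greedyCount (Λ d : ℝ) : ℕ := ⌊(Λ - d - 1 / 2) * Λ⌋₊

lemma greedyCount_spec (hΛ : 4 ≤ Λ) {d : ℝ} (hd : d ≤ 2) :
    Λ - greedyCount Λ d / Λ - d ∈ Set.Icc (1 / 2) (3 / 4) := by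
  have hΛ₀ : 0 < Λ := by linarith
  have h₁ : (greedyCount Λ d : ℝ) / Λ ≤ Λ - d - 1 / 2 :=
    (div_le_iff₀ hΛ₀).2 (Nat.floor_le (mul_nonneg (by linarith) hΛ₀.le))
  have h₂ : Λ - d - 1 / 2 - 1 / Λ < greedyCount Λ d / Λ := by
    rw [lt_div_iff₀ hΛ₀, sub_mul, one_div_mul_cancel hΛ₀.ne']
    exact Nat.sub_one_lt_floor _
  have h₃ : 1 / Λ ≤ 1 / 4 := one_div_le_one_div_of_le (by norm_num) hΛ
  exact ⟨by linarith, by linarith⟩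

noncomputable def greedyInvRatio (Λ : ℝ) : ℕ → ℝ
  | 0 => 0
  | i + 1 => 1 / (Λ - greedyCount Λ (greedyInvRatio Λ i) / Λ - greedyInvRatio Λ i)

lemma pathRatio_greedyCount (i : ℕ) :
    pathRatio Λ (fun j => greedyCount Λ (greedyInvRatio Λ j)) i
      = Λ - greedyCount Λ (greedyInvRatio Λ i) / Λ - greedyInvRatio Λ i := by
  induction i with
  | zero => simp [pathRatio, greedyInvRatio]
  | succ i ih => rw [pathRatio, ih, greedyInvRatio]

lemma exists_pathRatio_mem_Icc (hΛ : 4 ≤ Λ) :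
    ∃ c : ℕ → ℕ, ∀ i, pathRatio Λ c i ∈ Set.Icc (1 / 2) (3 / 4) := by
  have hinv : ∀ i, greedyInvRatio Λ i ≤ 2 := by
    intro i
    induction i with
    | zero => simp [greedyInvRatio]
    | succ i ih =>
      have := (greedyCount_spec hΛ ih).1
      rw [greedyInvRatio, div_le_iff₀ (by linarith)]
      linarith
  exact ⟨_, fun i => pathRatio_greedyCount i ▸ greedyCount_spec hΛ (hinv i)⟩

end PathRatio

namespace Caterpillar

/- Path vertex `i`, filler `j` of the `i`-th path edge and vertex `l` of the `a`-th pendant edge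
at `i`, tagged by their residue mod 4 so that `weight` and `sign` can decode them. -/
def pathVert (i : ℕ) : ℕ := 4 * i
def fillVert (i j : ℕ) : ℕ := 4 * Nat.pair i j + 1
def pendVert (i a l : ℕ) : ℕ := 4 * Nat.pair i (Nat.pair a l) + 2

lemma pathVert_mod_four (i : ℕ) : pathVert i % 4 = 0 ∧ pathVert i / 4 = i := by
  unfold pathVert; omega
lemma fillVert_mod_four (i j : ℕ) : fillVert i j % 4 = 1 ∧ fillVert i j / 4 = Nat.pair i j := by
  unfold fillVert; omega
lemma pendVert_mod_four (i a l : ℕ) :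
    pendVert i a l % 4 = 2 ∧ pendVert i a l / 4 = Nat.pair i (Nat.pair a l) := by
  unfold pendVert; omega

@[simp] lemma pathVert_inj {i i' : ℕ} : pathVert i = pathVert i' ↔ i = i' := by
  unfold pathVert; omega

@[simp] lemma fillVert_inj {i j i' j' : ℕ} : fillVert i j = fillVert i' j' ↔ i = i' ∧ j = j' := by
  rw [fillVert, fillVert, ← Nat.pair_eq_pair]; omega

@[simp] lemma pendVert_inj {i a l i' a' l' : ℕ} :
    pendVert i a l = pendVert i' a' l' ↔ i = i' ∧ a = a' ∧ l = l' := by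
  rw [pendVert, pendVert, ← Nat.pair_eq_pair, ← Nat.pair_eq_pair]; omega

@[simp] lemma pathVert_ne_fillVert (i i' j : ℕ) : pathVert i ≠ fillVert i' j := by
  unfold pathVert fillVert; omega
@[simp] lemma fillVert_ne_pathVert (i i' j : ℕ) : fillVert i' j ≠ pathVert i := by
  unfold pathVert fillVert; omega
@[simp] lemma pathVert_ne_pendVert (i i' a l : ℕ) : pathVert i ≠ pendVert i' a l := by
  unfold pathVert pendVert; omega
@[simp] lemma pendVert_ne_pathVert (i i' a l : ℕ) : pendVert i' a l ≠ pathVert i := by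
  unfold pathVert pendVert; omega
@[simp] lemma fillVert_ne_pendVert (i j i' a l : ℕ) : fillVert i j ≠ pendVert i' a l := by
  unfold fillVert pendVert; omega
@[simp] lemma pendVert_ne_fillVert (i j i' a l : ℕ) : pendVert i' a l ≠ fillVert i j := by
  unfold fillVert pendVert; omega

def fillers (t i : ℕ) : Finset ℕ := (range (2 * t + 2)).image (fillVert i)
def pendants (t i a : ℕ) : Finset ℕ := (range (2 * t + 3)).image (pendVert i a)
def pathEdge (t i : ℕ) : Finset ℕ := insert (pathVert i) (insert (pathVert (i + 1)) (fillers t i))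
def pendantEdge (t i a : ℕ) : Finset ℕ := insert (pathVert i) (pendants t i a)

def edges (t n : ℕ) (c : ℕ → ℕ) : Finset (Finset ℕ) :=
  (range n).image (pathEdge t) ∪
    (range (n + 1)).biUnion fun i => (range (c i)).image (pendantEdge t i)

variable {t n : ℕ} {c : ℕ → ℕ}

@[simp] lemma pathVert_mem_pathEdge {m i : ℕ} : pathVert m ∈ pathEdge t i ↔ m = i ∨ m = i + 1 := by
  simp [pathEdge, fillers]
@[simp] lemma fillVert_mem_pathEdge {m j i : ℕ} :
    fillVert m j ∈ pathEdge t i ↔ m = i ∧ j < 2 * t + 2 := by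
  simp [pathEdge, fillers]; omega
@[simp] lemma pendVert_not_mem_pathEdge {m a l i : ℕ} : pendVert m a l ∉ pathEdge t i := by
  simp [pathEdge, fillers]
@[simp] lemma pathVert_mem_pendantEdge {m i a : ℕ} : pathVert m ∈ pendantEdge t i a ↔ m = i := by
  simp [pendantEdge, pendants]
@[simp] lemma fillVert_not_mem_pendantEdge {m j i a : ℕ} : fillVert m j ∉ pendantEdge t i a := by
  simp [pendantEdge, pendants]
@[simp] lemma pendVert_mem_pendantEdge {m b l i a : ℕ} :
    pendVert m b l ∈ pendantEdge t i a ↔ m = i ∧ b = a ∧ l < 2 * t + 3 := by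
  simp [pendantEdge, pendants]; omega

lemma pathEdge_injective : Function.Injective (pathEdge t) := fun i i' h => by
  have h₁ : pathVert i ∈ pathEdge t i' := h ▸ pathVert_mem_pathEdge.2 (Or.inl rfl)
  have h₂ : pathVert (i + 1) ∈ pathEdge t i' := h ▸ pathVert_mem_pathEdge.2 (Or.inr rfl)
  simp only [pathVert_mem_pathEdge] at h₁ h₂
  omega

lemma pendantEdge_inj {i a i' a' : ℕ} (h : pendantEdge t i a = pendantEdge t i' a') :
    i = i' ∧ a = a' := by
  have : pendVert i a 0 ∈ pendantEdge t i' a' := h ▸ pendVert_mem_pendantEdge.2 (by simp)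
  simpa using this

lemma pathEdge_ne_pendantEdge (i i' a : ℕ) : pathEdge t i ≠ pendantEdge t i' a := fun h =>
  fillVert_not_mem_pendantEdge (h ▸ fillVert_mem_pathEdge.2 ⟨rfl, by omega⟩ : fillVert i 0 ∈ _)

lemma card_pathEdge (i : ℕ) : (pathEdge t i).card = 2 * t + 4 := by
  rw [pathEdge, card_insert_of_notMem (by simp [fillers]),
    card_insert_of_notMem (by simp [fillers]),
    fillers, card_image_of_injective _ fun _ _ h => (fillVert_inj.1 h).2, card_range]

lemma card_pendantEdge (i a : ℕ) : (pendantEdge t i a).card = 2 * t + 4 := by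
  rw [pendantEdge, card_insert_of_notMem (by simp [pendants]), pendants,
    card_image_of_injective _ fun _ _ h => (pendVert_inj.1 h).2.2, card_range]

lemma mem_edges {e : Finset ℕ} :
    e ∈ edges t n c ↔
      (∃ i < n, pathEdge t i = e) ∨ ∃ i < n + 1, ∃ a < c i, pendantEdge t i a = e := by
  simp [edges]

variable (t n c) in
def caterpillar : UniformHypergraph (2 * t + 4) where
  verts := (edges t n c).sup id
  edges := edges t n c
  subset_verts _ he := le_sup (f := id) he
  uniform e he := by
    obtain ⟨i, -, rfl⟩ | ⟨i, -, a, -, rfl⟩ := mem_edges.1 he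
    · exact card_pathEdge i
    · exact card_pendantEdge i a

lemma mem_caterpillar_verts {v : ℕ} (hv : v ∈ (caterpillar t n c).verts) :
    (∃ m ≤ n, v = pathVert m) ∨ (∃ m < n, ∃ j < 2 * t + 2, v = fillVert m j) ∨
      ∃ m ≤ n, ∃ a < c m, ∃ l < 2 * t + 3, v = pendVert m a l := by
  obtain ⟨e, he, hve⟩ := mem_sup.1 hv
  obtain ⟨i, hi, rfl⟩ | ⟨i, hi, a, ha, rfl⟩ := mem_edges.1 he
  · simp only [pathEdge, fillers, mem_insert, mem_image, mem_range, id] at hve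
    obtain rfl | rfl | ⟨j, hj, rfl⟩ := hve
    · exact Or.inl ⟨i, by omega, rfl⟩
    · exact Or.inl ⟨i + 1, hi, rfl⟩
    · exact Or.inr (Or.inl ⟨i, hi, j, hj, rfl⟩)
  · simp only [pendantEdge, pendants, mem_insert, mem_image, mem_range, id] at hve
    obtain rfl | ⟨l, hl, rfl⟩ := hve
    · exact Or.inl ⟨i, by omega, rfl⟩
    · exact Or.inr (Or.inr ⟨i, by omega, a, ha, l, hl, rfl⟩)

lemma sum_edges_filter_mem (v : ℕ) (f : Finset ℕ → ℝ) :
    ∑ e ∈ (edges t n c).filter (fun e => v ∈ e), f e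
      = ∑ i ∈ range n, (if v ∈ pathEdge t i then f (pathEdge t i) else 0)
        + ∑ i ∈ range (n + 1), ∑ a ∈ range (c i),
            if v ∈ pendantEdge t i a then f (pendantEdge t i a) else 0 := by
  have hdisj : Disjoint ((range n).image (pathEdge t))
      ((range (n + 1)).biUnion fun i => (range (c i)).image (pendantEdge t i)) := by
    simp only [disjoint_left, mem_image, mem_biUnion, not_exists, not_and]
    rintro _ ⟨i, -, rfl⟩ i' - a - h
    exact pathEdge_ne_pendantEdge i i' a h.symm
  have hpair : (range (n + 1) : Set ℕ).PairwiseDisjoint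
      fun i => (range (c i)).image (pendantEdge t i) := by
    intro i _ i' _ hii'
    simp only [Function.onFun, disjoint_left, mem_image, not_exists, not_and]
    rintro _ ⟨a, -, rfl⟩ a' - h
    exact hii' (pendantEdge_inj h).1.symm
  rw [sum_filter, edges, sum_union hdisj, sum_image fun _ _ _ _ h => pathEdge_injective h,
    sum_biUnion hpair]
  congr 1
  exact sum_congr rfl fun i _ => sum_image fun _ _ _ _ h => (pendantEdge_inj h).2

/- The eigenvector of the header, and a signing whose only `-1`s are filler `0` of each path edge
and vertex `0` of each pendant edge. -/
noncomputable def weight (ρ : ℝ) (X : ℕ → ℝ) (v : ℕ) : ℝ :=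
  if v % 4 = 0 then X (v / 4)
  else if v % 4 = 1 then √(X (v / 4).unpair.1 * X ((v / 4).unpair.1 + 1) / ρ)
  else X (v / 4).unpair.1 / ρ

def sign (v : ℕ) : ℝ :=
  if v % 4 = 1 ∧ (v / 4).unpair.2 = 0 ∨ v % 4 = 2 ∧ (v / 4).unpair.2.unpair.2 = 0 then -1 else 1

variable {ρ : ℝ} {X : ℕ → ℝ}

@[simp] lemma weight_pathVert (i : ℕ) : weight ρ X (pathVert i) = X i := by
  simp [weight, pathVert_mod_four]
@[simp] lemma weight_fillVert (i j : ℕ) : weight ρ X (fillVert i j) = √(X i * X (i + 1) / ρ) := by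
  simp [weight, fillVert_mod_four]
@[simp] lemma weight_pendVert (i a l : ℕ) : weight ρ X (pendVert i a l) = X i / ρ := by
  simp [weight, pendVert_mod_four]

@[simp] lemma sign_pathVert (i : ℕ) : sign (pathVert i) = 1 := by
  simp [sign, pathVert_mod_four]
@[simp] lemma sign_fillVert (i j : ℕ) : sign (fillVert i j) = if j = 0 then -1 else 1 := by
  simp [sign, fillVert_mod_four]
@[simp] lemma sign_pendVert (i a l : ℕ) : sign (pendVert i a l) = if l = 0 then -1 else 1 := by
  simp [sign, pendVert_mod_four]

lemma sign_eq_one_or_neg_one (v : ℕ) : sign v = 1 ∨ sign v = -1 := by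
  unfold sign; split_ifs <;> simp

lemma prod_sign_pathEdge (i : ℕ) : ∏ v ∈ pathEdge t i, sign v = -1 := by
  rw [pathEdge, prod_insert (by simp [fillers]), prod_insert (by simp [fillers]), fillers,
    prod_image fun _ _ _ _ h => (fillVert_inj.1 h).2]
  simp [prod_ite_eq']

lemma prod_sign_pendantEdge (i a : ℕ) : ∏ v ∈ pendantEdge t i a, sign v = -1 := by
  rw [pendantEdge, prod_insert (by simp [pendants]), pendants,
    prod_image fun _ _ _ _ h => (pendVert_inj.1 h).2.2]
  simp [prod_ite_eq']

lemma prod_weight_pathEdge (hρ : 0 < ρ) {i : ℕ} (hi : 0 ≤ X i) (hi' : 0 ≤ X (i + 1)) :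
    ∏ v ∈ pathEdge t i, weight ρ X v = (X i * X (i + 1)) ^ (t + 2) / ρ ^ (t + 1) := by
  rw [pathEdge, prod_insert (by simp [fillers]), prod_insert (by simp [fillers]), fillers,
    prod_image fun _ _ _ _ h => (fillVert_inj.1 h).2]
  simp only [weight_pathVert, weight_fillVert, prod_const, card_range]
  rw [show 2 * t + 2 = 2 * (t + 1) by ring, pow_mul,
    Real.sq_sqrt (div_nonneg (mul_nonneg hi hi') hρ.le), div_pow]
  ring

lemma prod_weight_pendantEdge (i a : ℕ) :
    ∏ v ∈ pendantEdge t i a, weight ρ X v = X i ^ (2 * t + 4) / ρ ^ (2 * t + 3) := by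
  rw [pendantEdge, prod_insert (by simp [pendants]), pendants,
    prod_image fun _ _ _ _ h => (pendVert_inj.1 h).2.2]
  simp only [weight_pathVert, weight_pendVert, prod_const, card_range]
  ring

lemma mul_pow_pathVert_eq_sum_prod (hρ : 0 < ρ) (hX : ∀ i ≤ n, 0 < X i)
    (h : PathEq n c (ρ ^ (t + 2)) fun j => X j ^ (t + 2)) {m : ℕ} (hm : m ≤ n) :
    ρ * X m ^ (2 * t + 4)
      = ∑ e ∈ (edges t n c).filter (fun e => pathVert m ∈ e), ∏ v ∈ e, weight ρ X v := by
  rw [sum_edges_filter_mem]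
  simp only [pathVert_mem_pathEdge, pathVert_mem_pendantEdge]
  rw [sum_range_ite_eq_or_eq_succ hm]
  have hpend : ∑ i ∈ range (n + 1), ∑ a ∈ range (c i),
      (if m = i then ∏ v ∈ pendantEdge t i a, weight ρ X v else 0)
        = c m * (X m ^ (2 * t + 4) / ρ ^ (2 * t + 3)) := by
    simp [sum_ite_irrel, prod_weight_pendantEdge, Nat.lt_succ_of_le hm]
  have hleft : (if m = 0 then 0 else ∏ v ∈ pathEdge t (m - 1), weight ρ X v)
      = (if m = 0 then 0 else X (m - 1) ^ (t + 2)) * (X m ^ (t + 2) / ρ ^ (t + 1)) := by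
    split_ifs with hm0
    · simp
    · obtain ⟨m, rfl⟩ := Nat.exists_eq_succ_of_ne_zero hm0
      rw [Nat.succ_sub_one, prod_weight_pathEdge hρ (hX m (by omega)).le (hX _ hm).le]
      ring
  have hright : (if m < n then ∏ v ∈ pathEdge t m, weight ρ X v else 0)
      = (if m < n then X (m + 1) ^ (t + 2) else 0) * (X m ^ (t + 2) / ρ ^ (t + 1)) := by
    split_ifs with hmn
    · rw [prod_weight_pathEdge hρ (hX m hm).le (hX _ hmn).le]
      ring
    · simp
  rw [hpend, hleft, hright, ← add_mul, ← h m hm]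
  field_simp
  ring

lemma mul_weight_pow_eq_sum_prod (hρ : 0 < ρ) (hX : ∀ i ≤ n, 0 < X i)
    (h : PathEq n c (ρ ^ (t + 2)) fun j => X j ^ (t + 2)) :
    ∀ v ∈ (caterpillar t n c).verts, ρ * weight ρ X v ^ (2 * t + 4)
      = ∑ e ∈ (caterpillar t n c).edges.filter (fun e => v ∈ e), ∏ w ∈ e, weight ρ X w := by
  intro v hv
  obtain ⟨m, hm, rfl⟩ | ⟨m, hm, j, hj, rfl⟩ | ⟨m, hm, a, ha, l, hl, rfl⟩ :=
    mem_caterpillar_verts hv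
  · rw [weight_pathVert]
    exact mul_pow_pathVert_eq_sum_prod hρ hX h hm
  · have hY : 0 ≤ X m * X (m + 1) / ρ := (div_pos (mul_pos (hX m hm.le) (hX _ hm)) hρ).le
    simp only [caterpillar, sum_edges_filter_mem, fillVert_mem_pathEdge, hj, and_true,
      fillVert_not_mem_pendantEdge, if_false, sum_const_zero, add_zero, sum_ite_eq, mem_range, hm,
      if_true, prod_weight_pathEdge hρ (hX m hm.le).le (hX _ hm).le, weight_fillVert]
    rw [show 2 * t + 4 = 2 * (t + 2) by ring, pow_mul, Real.sq_sqrt hY, div_pow, mul_pow]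
    field_simp
    ring
  · simp only [caterpillar, sum_edges_filter_mem, pendVert_not_mem_pathEdge, if_false,
      sum_const_zero, zero_add, pendVert_mem_pendantEdge, hl, and_true, weight_pendVert, ite_and,
      sum_ite_irrel, sum_ite_eq, mem_range, ha, Nat.lt_succ_of_le hm, if_true,
      prod_weight_pendantEdge]
    rw [div_pow]
    field_simp
    ring

lemma weight_pos (hρ : 0 < ρ) (hX : ∀ i ≤ n, 0 < X i) :
    ∀ v ∈ (caterpillar t n c).verts, 0 < weight ρ X v := by
  intro v hv
  obtain ⟨m, hm, rfl⟩ | ⟨m, hm, j, -, rfl⟩ | ⟨m, hm, a, -, l, -, rfl⟩ := mem_caterpillar_verts hv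
  · simpa using hX m hm
  · simpa using div_pos (mul_pos (hX m hm.le) (hX _ hm)) hρ
  · simpa using div_pos (hX m hm) hρ

lemma pathVert_zero_mem_verts (hne : 0 < n ∨ 0 < c 0) : pathVert 0 ∈ (caterpillar t n c).verts := by
  refine mem_sup.2 ?_
  rcases hne with hn | hc
  · exact ⟨pathEdge t 0, mem_edges.2 (Or.inl ⟨0, hn, rfl⟩), by simp⟩
  · exact ⟨pendantEdge t 0 0, mem_edges.2 (Or.inr ⟨0, by omega, 0, hc, rfl⟩), by simp⟩

theorem isLeast_caterpillar (hρ : 0 < ρ) (hX : ∀ i ≤ n, 0 < X i)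
    (h : PathEq n c (ρ ^ (t + 2)) fun j => X j ^ (t + 2)) :
    IsLeast {μ | (caterpillar t n c).IsAdjHEig μ} (-ρ) := by
  have hne : 0 < n ∨ 0 < c 0 := by
    by_contra! hnc
    have h₀ := h 0 (Nat.zero_le n)
    simp [show n = 0 by omega, show c 0 = 0 by omega] at h₀
    exact h₀.elim hρ.ne' (hX 0 (Nat.zero_le n)).ne'
  refine UniformHypergraph.isLeast_neg_of_signing ⟨t + 1, by omega⟩ sign_eq_one_or_neg_one
    (fun e he => ?_) (weight_pos hρ hX) ?_ ⟨_, pathVert_zero_mem_verts hne⟩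
  · obtain ⟨i, -, rfl⟩ | ⟨i, -, a, -, rfl⟩ := mem_edges.1 he
    · exact prod_sign_pathEdge i
    · exact prod_sign_pendantEdge i a
  · exact UniformHypergraph.eigenEq_of_forall_mul_pow (by omega)
      (fun v hv => (weight_pos hρ hX v hv).ne') (mul_weight_pow_eq_sum_prod hρ hX h)

end Caterpillar

open Caterpillar in
theorem exists_caterpillar_isLeast (t : ℕ) {ρ₁ ρ₂ : ℝ} (h₁ : 0 < ρ₁) (h₁₂ : ρ₁ < ρ₂)
    (h₂ : 4 ≤ ρ₂ ^ (t + 2)) :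
    ∃ n c, ∃ ρ ∈ Set.Icc ρ₁ ρ₂, IsLeast {μ | (caterpillar t n c).IsAdjHEig μ} (-ρ) := by
  obtain ⟨c, hc⟩ := exists_pathRatio_mem_Icc h₂
  obtain ⟨Λ, ⟨hΛ₁, hΛ₂⟩, n, hn, hpos⟩ :=
    exists_pathRatio_eq_zero (pow_pos h₁ (t + 2)) (pow_lt_pow_left₀ h₁₂ h₁.le (by omega))
      fun i => ⟨by linarith [(hc i).1], by linarith [(hc i).2]⟩
  have hΛ : 0 < Λ := (pow_pos h₁ _).trans_le hΛ₁
  set w : ℕ → ℝ := fun j => ∏ i ∈ range j, pathRatio Λ c i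
  have hw : ∀ j ≤ n, 0 < w j := fun j hj => prod_pos fun i hi => hpos i (by simp at hi; omega)
  set e : ℝ := ((t + 2 : ℕ) : ℝ)⁻¹
  have hρ₁ : ρ₁ ≤ Λ ^ e := by
    have := Real.rpow_le_rpow (pow_pos h₁ _).le hΛ₁ (by positivity : 0 ≤ e)
    rwa [Real.pow_rpow_inv_natCast h₁.le (by omega)] at this
  have hρ₂ : Λ ^ e ≤ ρ₂ := by
    have := Real.rpow_le_rpow hΛ.le hΛ₂ (by positivity : 0 ≤ e)
    rwa [Real.pow_rpow_inv_natCast (h₁.trans h₁₂).le (by omega)] at this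
  refine ⟨n, c, Λ ^ e, ⟨hρ₁, hρ₂⟩, isLeast_caterpillar (X := fun j => w j ^ e)
    (Real.rpow_pos_of_pos hΛ _) (fun i hi => Real.rpow_pos_of_pos (hw i hi) _) ?_⟩
  rw [Real.rpow_inv_natCast_pow hΛ.le (by omega)]
  exact (pathEq_prod_pathRatio hΛ.ne' hn hpos).congr fun j hj =>
    Real.rpow_inv_natCast_pow (hw j hj).le (by omega)

/-- for even `k ≥ 4`, every real `r ≤ -√(2+√5)` is a limit point of the least
adjacency H-eigenvalues of `k`-uniform hypergraphs. -/
theorem stmt17 (k : ℕ) (hk : 4 ≤ k) (hke : Even k)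
    (r : ℝ) (hr : r ≤ -Real.sqrt (2 + Real.sqrt 5)) :
    ∃ (H : ℕ → UniformHypergraph k) (lam : ℕ → ℝ),
      (∀ n : ℕ, (H n).IsAdjHEig (lam n) ∧
        ∀ μ : ℝ, (H n).IsAdjHEig μ → lam n ≤ μ) ∧
      Filter.Tendsto lam Filter.atTop (nhds r) := by
  obtain ⟨t, rfl⟩ : ∃ t, k = 2 * t + 4 := by
    obtain ⟨s, rfl⟩ := hke
    exact ⟨s - 2, by omega⟩
  have hr₂ : 2 ≤ -r := by
    have h5 : 2 ≤ √5 := Real.le_sqrt_of_sq_le (by norm_num)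
    have : 2 ≤ √(2 + √5) := Real.le_sqrt_of_sq_le (by linarith)
    linarith
  have h₄ : 4 ≤ (-r) ^ (t + 2) := by
    calc (4 : ℝ) = 2 ^ 2 := by norm_num
      _ ≤ 2 ^ (t + 2) := pow_le_pow_right₀ (by norm_num) (by omega)
      _ ≤ (-r) ^ (t + 2) := pow_le_pow_left₀ (by norm_num) hr₂ _
  have hgap : ∀ m : ℕ, 0 < 1 / ((m : ℝ) + 1) ∧ 1 / ((m : ℝ) + 1) ≤ 1 := fun m =>
    ⟨by positivity, (div_le_one (by positivity)).2 (by simp)⟩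
  have hcat : ∀ m : ℕ, ∃ H : UniformHypergraph (2 * t + 4),
      ∃ ρ ∈ Set.Icc (-r - 1 / ((m : ℝ) + 1)) (-r), IsLeast {μ | H.IsAdjHEig μ} (-ρ) := fun m =>
    have ⟨_, _, hρ⟩ := exists_caterpillar_isLeast t (by linarith [hgap m]) (by linarith [hgap m]) h₄
    ⟨_, hρ⟩
  choose H ρ hρ hleast using hcat
  refine ⟨H, fun m => -ρ m, fun m => ⟨(hleast m).1, fun μ hμ => (hleast m).2 hμ⟩, ?_⟩
  have hlim : Filter.Tendsto (fun m : ℕ => r + 1 / ((m : ℝ) + 1)) Filter.atTop (nhds r) := by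
    simpa using tendsto_one_div_add_atTop_nhds_zero_nat.const_add r
  exact tendsto_of_tendsto_of_tendsto_of_le_of_le tendsto_const_nhds hlim
    (fun m => by linarith [(hρ m).2]) fun m => by linarith [(hρ m).1]
end

section
/- Let k ≥ 4 be an even integer. Then there exists a sequence (H_n) of k-uniform hypergraphs, each of which is not odd-bipartite, and a sequence (λ_n) of real numbers such that for each n, λ_n is an adjacency H-eigenvalue of H_n with λ_n ≤ μ for every adjacency H-eigenvalue μ of H_n (i.e., λ_n is the least adjacency H-eigenvalue of H_n), and λ_n → −√(2+√5) as n → ∞. In other words, −√(2+√5) is a limit point of the least adjacency H-eigenvalues of non-odd-bipartite k-uniform hypergraphs. -/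
open Finset

/-- The hypergraph `H` is odd-bipartite: some vertex subset `V₁` meets every edge in an odd
number of vertices. -/
def UniformHypergraph.OddBipartite {k : ℕ} (H : UniformHypergraph k) : Prop :=
  ∃ V₁ : Finset ℕ, ∀ e ∈ H.edges, Odd ((e ∩ V₁).card)

/-!
The hypergraphs are the `k`-th powers (`k = 2q`) of the graphs `G_N = T(1, N, N) ⊔ K₃`: each
vertex `i` of `G_N` is blown up to a block of `q` vertices and each edge `ij` becomes the union of
the two blocks. The triangle keeps the power from being odd-bipartite. Block products turn an
H-eigenpair `(μ, x)` of the power into a vector `s ≠ 0` with `μ s_i² = s_i (A s)_i`, and `q`-th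
roots turn eigenvectors of `A` back into H-eigenvectors, so the least H-eigenvalue of the power is
the least adjacency eigenvalue `λ_N` of `G_N`.

With `γ = √φ` and `θ = γ + γ⁻¹ = √(2 + √5)`, the form `⟨x, A x⟩ + θ ‖x‖²` of `G_N` is a sum of
squares, peeling the two long arms of the tree from the leaves inwards. A vector decaying like
`(-γ⁻¹)^d` with the distance `d` to the centre kills every square but two of size `γ⁻¹ φ⁻ᴺ`, so
`-θ ≤ λ_N ≤ -θ + 2 γ⁻¹ φ⁻ᴺ`.
-/

open Module.End in
theorem LinearMap.IsSymmetric.exists_hasEigenvalue_mul_norm_sq_le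
    {E : Type*} [NormedAddCommGroup E] [InnerProductSpace ℝ E] [FiniteDimensional ℝ E]
    [Nontrivial E] {T : E →ₗ[ℝ] E} (hT : T.IsSymmetric) :
    ∃ μ : ℝ, HasEigenvalue T μ ∧ ∀ x, μ * ‖x‖ ^ 2 ≤ inner ℝ (T x) x := by
  let T' := LinearMap.toContinuousLinearMap T
  have hbdd : BddBelow (Set.range fun x : {x : E // x ≠ 0} => T'.rayleighQuotient x) :=
    ⟨-‖T'‖, by
      rintro _ ⟨x, rfl⟩
      exact neg_le_of_abs_le (T'.rayleighQuotient_le_norm x)⟩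
  refine ⟨_, hT.hasEigenvalue_iInf_of_finiteDimensional, fun x => ?_⟩
  rcases eq_or_ne x 0 with rfl | hx
  · simp
  have hle := ciInf_le hbdd ⟨x, hx⟩
  rw [← le_div_iff₀ (by positivity)]
  exact hle

noncomputable def adjacency (E : Finset (ℕ × ℕ)) : (ℕ → ℝ) →ₗ[ℝ] ℕ → ℝ :=
  ∑ p ∈ E, (LinearMap.single ℝ (fun _ => ℝ) p.1 ∘ₗ LinearMap.proj p.2 +
    LinearMap.single ℝ (fun _ => ℝ) p.2 ∘ₗ LinearMap.proj p.1)

theorem adjacency_apply (E : Finset (ℕ × ℕ)) (s : ℕ → ℝ) (i : ℕ) :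
    adjacency E s i =
      ∑ p ∈ E, ((if i = p.1 then s p.2 else 0) + (if i = p.2 then s p.1 else 0)) := by
  simp [adjacency, LinearMap.sum_apply, Finset.sum_apply, Pi.single_apply]

theorem sum_mul_adjacency {m : ℕ} {E : Finset (ℕ × ℕ)} (hE : ∀ p ∈ E, p.1 < p.2 ∧ p.2 < m)
    (x y : ℕ → ℝ) :
    ∑ i ∈ range m, y i * adjacency E x i = ∑ p ∈ E, (y p.1 * x p.2 + y p.2 * x p.1) := by
  simp_rw [adjacency_apply, mul_sum]
  rw [sum_comm]
  refine sum_congr rfl fun p hp => ?_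
  have h1 : p.1 ∈ range m := mem_range.2 (by have := hE p hp; omega)
  have h2 : p.2 ∈ range m := mem_range.2 (hE p hp).2
  simp [mul_add, sum_add_distrib, h1, h2]

theorem adjacency_congr {m : ℕ} {E : Finset (ℕ × ℕ)} (hE : ∀ p ∈ E, p.1 < p.2 ∧ p.2 < m)
    {x y : ℕ → ℝ} (hxy : ∀ i < m, x i = y i) (i : ℕ) : adjacency E x i = adjacency E y i := by
  simp only [adjacency_apply]
  refine sum_congr rfl fun p hp => ?_
  have := hE p hp
  rw [hxy p.1 (by omega), hxy p.2 this.2]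

structure IsLeastAdjEigenvalue (m : ℕ) (E : Finset (ℕ × ℕ)) (lam : ℝ) : Prop where
  exists_eigenvector : ∃ s : ℕ → ℝ, (∃ i < m, s i ≠ 0) ∧ ∀ i < m, adjacency E s i = lam * s i
  mul_sum_sq_le : ∀ x : ℕ → ℝ, lam * ∑ i ∈ range m, x i ^ 2 ≤ ∑ i ∈ range m, x i * adjacency E x i

theorem exists_isLeastAdjEigenvalue {m : ℕ} (hm : 0 < m) {E : Finset (ℕ × ℕ)}
    (hE : ∀ p ∈ E, p.1 < p.2 ∧ p.2 < m) : ∃ lam, IsLeastAdjEigenvalue m E lam := by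
  let extend := Function.ExtendByZero.linearMap ℝ (Fin.val : Fin m → ℕ) ∘ₗ
    (WithLp.linearEquiv 2 ℝ (Fin m → ℝ)).toLinearMap
  let T := (WithLp.linearEquiv 2 ℝ (Fin m → ℝ)).symm.toLinearMap ∘ₗ
    LinearMap.funLeft ℝ ℝ Fin.val ∘ₗ adjacency E ∘ₗ extend
  have extend_apply (z : EuclideanSpace ℝ (Fin m)) (i : Fin m) : extend z i = z i :=
    Fin.val_injective.extend_apply _ _ i
  have inner_T (z w : EuclideanSpace ℝ (Fin m)) :
      inner ℝ (T z) w = ∑ i ∈ range m, extend w i * adjacency E (extend z) i := by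
    rw [← Fin.sum_univ_eq_sum_range (fun i => extend w i * adjacency E (extend z) i),
      PiLp.inner_apply]
    refine sum_congr rfl fun i _ => ?_
    simp [extend_apply, T]
  have hT : T.IsSymmetric := fun z w => by
    rw [inner_T, real_inner_comm, inner_T, sum_mul_adjacency hE, sum_mul_adjacency hE]
    exact sum_congr rfl fun p _ => by ring
  have : Nonempty (Fin m) := ⟨⟨0, hm⟩⟩
  obtain ⟨lam, hlam, hle⟩ := hT.exists_hasEigenvalue_mul_norm_sq_le
  refine ⟨lam, ⟨?_, fun x => ?_⟩⟩
  · obtain ⟨z, hz⟩ := hlam.exists_hasEigenvector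
    obtain ⟨i, hi⟩ : ∃ i, z i ≠ 0 := by
      by_contra! h
      exact hz.2 (PiLp.ext h)
    refine ⟨extend z, ⟨i, i.2, by rwa [extend_apply]⟩, fun j hj => ?_⟩
    rw [show extend z j = z ⟨j, hj⟩ from extend_apply z ⟨j, hj⟩]
    simpa [T, extend_apply] using congrArg (· ⟨j, hj⟩) hz.apply_eq_smul
  · let z : EuclideanSpace ℝ (Fin m) := WithLp.toLp 2 fun i => x i
    have hz (i : ℕ) (hi : i < m) : extend z i = x i := extend_apply z ⟨i, hi⟩
    have hnorm : ‖z‖ ^ 2 = ∑ i ∈ range m, x i ^ 2 := by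
      rw [EuclideanSpace.norm_sq_eq, ← Fin.sum_univ_eq_sum_range (fun i => x i ^ 2)]
      simp [z]
    have hinner := inner_T z z
    rw [sum_congr rfl fun i hi => by
      rw [hz i (mem_range.1 hi), adjacency_congr hE hz]] at hinner
    simpa [hnorm, hinner] using hle z

theorem sum_sq_pos_of_exists_ne_zero {m : ℕ} {s : ℕ → ℝ} (hs : ∃ i < m, s i ≠ 0) :
    0 < ∑ i ∈ range m, s i ^ 2 := by
  obtain ⟨i, hi, hsi⟩ := hs
  exact sum_pos' (fun j _ => sq_nonneg _) ⟨i, mem_range.2 hi, by positivity⟩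

namespace IsLeastAdjEigenvalue

variable {m : ℕ} {E : Finset (ℕ × ℕ)} {lam : ℝ}

theorem nonpos (h : IsLeastAdjEigenvalue m E lam) (hm : 0 < m)
    (hE : ∀ p ∈ E, p.1 < p.2 ∧ p.2 < m) : lam ≤ 0 := by
  have := h.mul_sum_sq_le (Pi.single 0 1)
  rwa [sum_mul_adjacency hE, sum_eq_zero (s := E) fun p hp => ?_,
    sum_eq_single_of_mem 0 (mem_range.2 hm) fun i _ hi => ?_, Pi.single_eq_same,
    one_pow, mul_one] at this
  · simp [hi]
  · have := hE p hp
    simp [Pi.single_apply, show p.2 ≠ 0 by omega]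

theorem le_of_forall_mul_sum_sq_le (h : IsLeastAdjEigenvalue m E lam) {c : ℝ}
    (hc : ∀ x : ℕ → ℝ, c * ∑ i ∈ range m, x i ^ 2 ≤ ∑ i ∈ range m, x i * adjacency E x i) :
    c ≤ lam := by
  obtain ⟨s, hs, heig⟩ := h.exists_eigenvector
  have hquad : ∑ i ∈ range m, s i * adjacency E s i = lam * ∑ i ∈ range m, s i ^ 2 := by
    rw [mul_sum]
    exact sum_congr rfl fun i hi => by rw [heig i (mem_range.1 hi)]; ring
  have := hc s
  rw [hquad] at this
  exact le_of_mul_le_mul_right this (sum_sq_pos_of_exists_ne_zero hs)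

theorem le_of_forall_mul_sq_eq (h : IsLeastAdjEigenvalue m E lam) {μ : ℝ} {s : ℕ → ℝ}
    (hs : ∃ i < m, s i ≠ 0) (hμ : ∀ i < m, μ * s i ^ 2 = s i * adjacency E s i) : lam ≤ μ := by
  have hquad : ∑ i ∈ range m, s i * adjacency E s i = μ * ∑ i ∈ range m, s i ^ 2 := by
    rw [mul_sum]
    exact sum_congr rfl fun i hi => (hμ i (mem_range.1 hi)).symm
  have := h.mul_sum_sq_le s
  rw [hquad] at this
  exact le_of_mul_le_mul_right this (sum_sq_pos_of_exists_ne_zero hs)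

end IsLeastAdjEigenvalue

def block (q i : ℕ) : Finset ℕ := Ico (q * i) (q * i + q)

theorem mem_block {q i v : ℕ} (hq : 0 < q) : v ∈ block q i ↔ v / q = i := by
  rw [block, mem_Ico]
  constructor
  · rintro ⟨h1, h2⟩
    exact Nat.div_eq_of_lt_le (by linarith [Nat.mul_comm q i])
      (by rw [Nat.succ_mul]; linarith [Nat.mul_comm q i])
  · rintro rfl
    have := Nat.div_add_mod v q
    have := Nat.mod_lt v hq
    omega

theorem card_block (q i : ℕ) : (block q i).card = q := by simp [block]

theorem block_disjoint {q a b : ℕ} (hab : a < b) : Disjoint (block q a) (block q b) := by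
  have : q * a + q ≤ q * b := by nlinarith
  exact disjoint_left.2 fun v h1 h2 => by simp only [block, mem_Ico] at h1 h2; omega

theorem block_subset_range {q i m : ℕ} (hi : i < m) : block q i ⊆ range (q * m) := by
  have : q * i + q ≤ q * m := by nlinarith
  exact fun v hv => by simp only [block, mem_Ico, mem_range] at hv ⊢; omega

/-- The power `G^{2q, q}` of the graph `G` on `{0, …, m-1}` whose edges `ij`, `i < j`, are listed
in `E`. -/
def powerHypergraph (q m : ℕ) (E : Finset (ℕ × ℕ)) (hE : ∀ p ∈ E, p.1 < p.2 ∧ p.2 < m) :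
    UniformHypergraph (q + q) where
  verts := range (q * m)
  edges := E.image fun p => block q p.1 ∪ block q p.2
  subset_verts := by
    simp only [mem_image, forall_exists_index, and_imp]
    rintro _ p hp rfl
    exact union_subset (block_subset_range (by linarith [hE p hp]))
      (block_subset_range (hE p hp).2)
  uniform := by
    simp only [mem_image, forall_exists_index, and_imp]
    rintro _ p hp rfl
    rw [card_union_of_disjoint (block_disjoint (hE p hp).1), card_block, card_block]

def blockProd (q : ℕ) (x : ℕ → ℝ) (i : ℕ) : ℝ := ∏ w ∈ block q i, x w

theorem mem_block_union_iff {q a b v : ℕ} (hq : 0 < q) :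
    v ∈ block q a ∪ block q b ↔ v / q = a ∨ v / q = b := by
  rw [mem_union, mem_block hq, mem_block hq]

theorem block_union_inj {q a b c d : ℕ} (hq : 0 < q) (hab : a < b) (hcd : c < d)
    (h : block q a ∪ block q b = block q c ∪ block q d) : a = c ∧ b = d := by
  have hmem (j : ℕ) : (j = a ∨ j = b) ↔ (j = c ∨ j = d) := by
    simpa [mem_block_union_iff hq, Nat.mul_div_cancel_left _ hq] using
      congrArg (q * j ∈ ·) h
  have := hmem a; have := hmem b; have := hmem c; have := hmem d
  omega

theorem sum_filter_mem_powerHypergraph {q : ℕ} (hq : 0 < q) {m : ℕ} {E : Finset (ℕ × ℕ)}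
    (hE : ∀ p ∈ E, p.1 < p.2 ∧ p.2 < m) (x : ℕ → ℝ) (v : ℕ) :
    ∑ e ∈ (powerHypergraph q m E hE).edges.filter (v ∈ ·), ∏ w ∈ e.erase v, x w =
      (∏ w ∈ (block q (v / q)).erase v, x w) * adjacency E (blockProd q x) (v / q) := by
  have hinj : Set.InjOn (fun p : ℕ × ℕ => block q p.1 ∪ block q p.2) E :=
    fun p hp p' hp' h => Prod.ext_iff.2 (block_union_inj hq (hE p hp).1 (hE p' hp').1 h)
  rw [sum_filter, powerHypergraph, sum_image hinj, adjacency_apply, mul_sum]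
  refine sum_congr rfl fun p hp => ?_
  have hlt := (hE p hp).1
  simp only [mem_block_union_iff hq, blockProd]
  by_cases h1 : v / q = p.1
  · have hv2 : v ∉ block q p.2 := fun h => by rw [mem_block hq] at h; omega
    rw [if_pos (Or.inl h1), if_pos h1, if_neg (by omega), h1, erase_union_distrib,
      erase_eq_of_notMem hv2,
      prod_union (disjoint_of_subset_left (erase_subset _ _) (block_disjoint hlt))]
    ring
  by_cases h2 : v / q = p.2
  · have hv1 : v ∉ block q p.1 := fun h => by rw [mem_block hq] at h; omega
    rw [if_pos (Or.inr h2), if_neg h1, if_pos h2, h2, erase_union_distrib,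
      erase_eq_of_notMem hv1,
      prod_union (disjoint_of_subset_right (erase_subset _ _) (block_disjoint hlt))]
    ring
  · rw [if_neg (by tauto), if_neg h1, if_neg h2]
    ring

theorem pow_pred_eq_mul_of_mul_eq {R : Type*} [CommRing R] [IsDomain R] {a b c : R} {n : ℕ}
    (hn : 2 ≤ n) (habc : a * b = c) (ha : a ^ n = c ^ 2) : a ^ (n - 1) = c * b := by
  rcases eq_or_ne a 0 with rfl | ha0
  · rw [← habc, zero_mul, zero_mul, zero_pow (by omega)]
  · apply mul_left_cancel₀ ha0
    rw [mul_pow_sub_one (by omega), ha, ← habc]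
    ring

theorem prod_sq_eq_of_forall_pow_eq {ι : Type*} {B : Finset ι} {x : ι → ℝ} {c : ℝ}
    (hB : B.Nonempty) (h : ∀ w ∈ B, x w ^ (#B + #B) = c) : (∏ w ∈ B, x w) ^ 2 = c := by
  obtain ⟨v, hv⟩ := hB
  have hsq (w : ι) (hw : w ∈ B) : x w ^ 2 = x v ^ 2 := by
    refine (pow_left_inj₀ (sq_nonneg _) (sq_nonneg _) (card_ne_zero_of_mem hv)).1 ?_
    rw [← pow_mul, ← pow_mul, two_mul, h w hw, h v hv]
  rw [← prod_pow, prod_congr rfl hsq, prod_const, ← pow_mul, two_mul, h v hv]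

noncomputable def blockRoot (q : ℕ) (s : ℕ → ℝ) (v : ℕ) : ℝ :=
  if v % q = 0 ∧ s (v / q) < 0 then -(|s (v / q)| ^ (q⁻¹ : ℝ)) else |s (v / q)| ^ (q⁻¹ : ℝ)

theorem blockRoot_pow {q : ℕ} (hq : 0 < q) (s : ℕ → ℝ) (v : ℕ) :
    blockRoot q s v ^ (q + q) = s (v / q) ^ 2 := by
  have hroot : (|s (v / q)| ^ (q⁻¹ : ℝ)) ^ q = |s (v / q)| :=
    Real.rpow_inv_natCast_pow (abs_nonneg _) hq.ne'
  unfold blockRoot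
  split_ifs
  · rw [Even.neg_pow ⟨q, rfl⟩, pow_add, hroot, abs_mul_abs_self, sq]
  · rw [pow_add, hroot, abs_mul_abs_self, sq]

theorem blockProd_blockRoot {q : ℕ} (hq : 0 < q) (s : ℕ → ℝ) (i : ℕ) :
    blockProd q (blockRoot q s) i = s i := by
  have hhead : q * i ∈ block q i := (mem_block hq).2 (Nat.mul_div_cancel_left i hq)
  have htail (w : ℕ) (hw : w ∈ (block q i).erase (q * i)) :
      blockRoot q s w = |s i| ^ (q⁻¹ : ℝ) := by
    obtain ⟨hne, hw⟩ := mem_erase.1 hw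
    rw [mem_block hq] at hw
    have := Nat.div_add_mod w q
    rw [blockRoot, if_neg (fun h => hne (by rw [hw] at this; omega)), hw]
  have hroot : (|s i| ^ (q⁻¹ : ℝ)) ^ q = |s i| := Real.rpow_inv_natCast_pow (abs_nonneg _) hq.ne'
  rw [blockProd, ← mul_prod_erase _ _ hhead, prod_congr rfl htail, prod_const,
    card_erase_of_mem hhead, card_block, blockRoot, Nat.mul_mod_right,
    Nat.mul_div_cancel_left i hq]
  split_ifs with hneg
  · rw [neg_mul, mul_pow_sub_one hq.ne', hroot, abs_of_neg hneg.2, neg_neg]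
  · rw [mul_pow_sub_one hq.ne', hroot, abs_of_nonneg (by simpa using hneg)]

theorem isAdjHEig_powerHypergraph {q m : ℕ} (hq : 0 < q) {E : Finset (ℕ × ℕ)}
    (hE : ∀ p ∈ E, p.1 < p.2 ∧ p.2 < m) {lam : ℝ} {s : ℕ → ℝ} (hs : ∃ i < m, s i ≠ 0)
    (heig : ∀ i < m, adjacency E s i = lam * s i) : (powerHypergraph q m E hE).IsAdjHEig lam := by
  refine ⟨blockRoot q s, ?_, fun v hv => ?_⟩
  · obtain ⟨i, hi, hsi⟩ := hs
    have hhead : q * i ∈ block q i := (mem_block hq).2 (Nat.mul_div_cancel_left i hq)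
    rw [← blockProd_blockRoot hq s i, blockProd, prod_ne_zero_iff] at hsi
    exact ⟨q * i, block_subset_range hi hhead, hsi _ hhead⟩
  · have hvm : v / q < m :=
      (Nat.div_lt_iff_lt_mul hq).2 (by simpa [powerHypergraph, mul_comm] using hv)
    have hv' : v ∈ block q (v / q) := (mem_block hq).2 rfl
    have hprod : blockProd q (blockRoot q s) = s := funext (blockProd_blockRoot hq s)
    rw [sum_filter_mem_powerHypergraph hq hE, hprod, heig _ hvm,
      pow_pred_eq_mul_of_mul_eq (by omega)
        ((mul_prod_erase _ _ hv').trans (blockProd_blockRoot hq s _)) (blockRoot_pow hq s v)]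
    ring

theorem IsLeastAdjEigenvalue.le_of_isAdjHEig_powerHypergraph {q m : ℕ} {E : Finset (ℕ × ℕ)}
    {lam μ : ℝ} (h : IsLeastAdjEigenvalue m E lam) (hq : 0 < q) (hm : 0 < m)
    (hE : ∀ p ∈ E, p.1 < p.2 ∧ p.2 < m) (hμ : (powerHypergraph q m E hE).IsAdjHEig μ) :
    lam ≤ μ := by
  obtain ⟨x, ⟨v₀, hv₀, hx₀⟩, heq⟩ := hμ
  have hdiv {v : ℕ} (hv : v ∈ range (q * m)) : v / q < m :=
    (Nat.div_lt_iff_lt_mul hq).2 (by simpa [mul_comm] using hv)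
  have hblock {v : ℕ} : v ∈ block q (v / q) := (mem_block hq).2 rfl
  have hvertex (v : ℕ) (hv : v ∈ range (q * m)) :
      μ * x v ^ (q + q) = blockProd q x (v / q) * adjacency E (blockProd q x) (v / q) := by
    have := congrArg (x v * ·) (heq v hv)
    simp only [sum_filter_mem_powerHypergraph hq hE] at this
    rw [← mul_pow_sub_one (by omega : q + q ≠ 0), blockProd, ← mul_prod_erase _ _ hblock]
    linear_combination this
  rcases eq_or_ne μ 0 with rfl | hμ0
  · exact h.nonpos hm hE
  -- `hvertex` shows that `μ * x v ^ (q + q)` only depends on the block of `v`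
  have hsq (v : ℕ) (hv : v ∈ range (q * m)) : blockProd q x (v / q) ^ 2 = x v ^ (q + q) := by
    refine prod_sq_eq_of_forall_pow_eq ⟨v, hblock⟩ fun w hw => ?_
    rw [mem_block hq] at hw
    have hw' : w ∈ range (q * m) := block_subset_range (hdiv hv) ((mem_block hq).2 hw)
    rw [card_block]
    refine mul_left_cancel₀ hμ0 ?_
    rw [hvertex w hw', hvertex v hv, hw]
  refine h.le_of_forall_mul_sq_eq (s := blockProd q x) ⟨v₀ / q, hdiv hv₀, fun h0 => hx₀ ?_⟩
    fun i hi => ?_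
  · have := hsq v₀ hv₀
    rw [h0, zero_pow two_ne_zero] at this
    exact (pow_eq_zero_iff (by omega)).1 this.symm
  · have hi' : q * i ∈ range (q * m) := block_subset_range hi
      ((mem_block hq).2 (Nat.mul_div_cancel_left i hq))
    have := hvertex _ hi'
    rwa [← hsq _ hi', Nat.mul_div_cancel_left i hq] at this

theorem not_oddBipartite_powerHypergraph {q m : ℕ} {E : Finset (ℕ × ℕ)}
    (hE : ∀ p ∈ E, p.1 < p.2 ∧ p.2 < m) {a b c : ℕ} (hab : (a, b) ∈ E) (hbc : (b, c) ∈ E)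
    (hac : (a, c) ∈ E) : ¬ (powerHypergraph q m E hE).OddBipartite := by
  rintro ⟨V₁, hV₁⟩
  have hodd {i j : ℕ} (hij : (i, j) ∈ E) :
      Odd (#(block q i ∩ V₁) + #(block q j ∩ V₁)) := by
    have he : block q i ∪ block q j ∈ (powerHypergraph q m E hE).edges :=
      mem_image.2 ⟨_, hij, rfl⟩
    have := hV₁ _ he
    rwa [union_inter_distrib_right, card_union_of_disjoint
      (disjoint_of_subset_left inter_subset_left (disjoint_of_subset_right inter_subset_left
        (block_disjoint (hE _ hij).1)))] at this
  obtain ⟨k₁, h₁⟩ := hodd hab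
  obtain ⟨k₂, h₂⟩ := hodd hbc
  obtain ⟨k₃, h₃⟩ := hodd hac
  omega

theorem sum_range_path_eq_leaf {r : ℝ} (hr : r ≠ 0) (w : ℕ → ℝ) (L : ℕ) :
    ∑ i ∈ range L, (2 * (w i * w (i + 1)) + (r + r⁻¹) * w i ^ 2) + r⁻¹ * w L ^ 2 =
      r⁻¹ * (w 0 ^ 2 + ∑ i ∈ range L, (r * w i + w (i + 1)) ^ 2) := by
  induction L with
  | zero => simp
  | succ L ih =>
    rw [sum_range_succ, sum_range_succ]
    linear_combination ih - (2 * (w L * w (L + 1)) + r * w L ^ 2) * mul_inv_cancel₀ hr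

theorem sum_range_path_eq_root {r : ℝ} (hr : r ≠ 0) (w : ℕ → ℝ) (L : ℕ) :
    ∑ i ∈ range L, (2 * (w i * w (i + 1)) + (r + r⁻¹) * w (i + 1) ^ 2) + r⁻¹ * w 0 ^ 2 =
      r⁻¹ * (∑ i ∈ range L, (w i + r * w (i + 1)) ^ 2 + w L ^ 2) := by
  induction L with
  | zero => simp
  | succ L ih =>
    rw [sum_range_succ, sum_range_succ]
    linear_combination ih - (2 * (w L * w (L + 1)) + r * w (L + 1) ^ 2) * mul_inv_cancel₀ hr

noncomputable def sqrtGoldenRatio : ℝ := √Real.goldenRatio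

local notation "γ" => sqrtGoldenRatio

theorem sqrtGoldenRatio_sq : γ ^ 2 = Real.goldenRatio := Real.sq_sqrt Real.goldenRatio_pos.le

theorem one_lt_sqrtGoldenRatio : 1 < γ :=
  (Real.lt_sqrt zero_le_one).2 (by simpa using Real.one_lt_goldenRatio)

theorem sqrtGoldenRatio_pow_four : γ ^ 4 = γ ^ 2 + 1 := by
  rw [show γ ^ 4 = (γ ^ 2) ^ 2 by ring, sqrtGoldenRatio_sq, Real.goldenRatio_sq]

theorem sqrtGoldenRatio_sub_inv_mul_add_inv : (γ - γ⁻¹) * (γ + γ⁻¹) = 1 := by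
  have hγ0 : γ ≠ 0 := by linarith [one_lt_sqrtGoldenRatio]
  field_simp
  linear_combination sqrtGoldenRatio_pow_four

theorem sqrt_two_add_sqrt_five : √(2 + √5) = γ + γ⁻¹ := by
  have h5 : 2 + √5 = 2 * γ ^ 2 + 1 := by
    rw [sqrtGoldenRatio_sq, Real.goldenRatio]; ring
  have hγ0 : 0 < γ := by linarith [one_lt_sqrtGoldenRatio]
  rw [h5, Real.sqrt_eq_iff_eq_sq (by positivity) (by positivity)]
  field_simp
  linear_combination sqrtGoldenRatio_pow_four

/-- The tree `T(1, N, N)` (the path `0, …, 2N` with a pendant vertex `2N+1` at its middle `N`)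
next to a triangle on `2N+2, 2N+3, 2N+4`. -/
def tripodTriangleEdges (N : ℕ) : Finset (ℕ × ℕ) :=
  (range (2 * N)).image (fun i => (i, i + 1)) ∪
    {(N, 2 * N + 1), (2 * N + 2, 2 * N + 3), (2 * N + 3, 2 * N + 4), (2 * N + 2, 2 * N + 4)}

theorem tripodTriangleEdges_lt (N : ℕ) :
    ∀ p ∈ tripodTriangleEdges N, p.1 < p.2 ∧ p.2 < 2 * N + 5 := by
  simp only [tripodTriangleEdges, mem_union, mem_image, mem_range, mem_insert, mem_singleton]
  rintro p (⟨i, hi, rfl⟩ | rfl | rfl | rfl | rfl) <;> dsimp only <;> omega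

theorem sum_tripodTriangleEdges {M : Type*} [AddCommMonoid M] (N : ℕ) (f : ℕ × ℕ → M) :
    ∑ p ∈ tripodTriangleEdges N, f p =
      ∑ i ∈ range (2 * N), f (i, i + 1) + (f (N, 2 * N + 1) + (f (2 * N + 2, 2 * N + 3) +
        (f (2 * N + 3, 2 * N + 4) + f (2 * N + 2, 2 * N + 4)))) := by
  rw [tripodTriangleEdges, sum_union, sum_image (fun _ _ _ _ h => (Prod.ext_iff.1 h).1)]
  · rw [sum_insert, sum_insert, sum_insert, sum_singleton] <;> simp
  · simp only [disjoint_left, mem_image, mem_range, mem_insert, mem_singleton]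
    rintro _ ⟨i, hi, rfl⟩ h
    simp only [Prod.mk.injEq] at h
    omega

theorem sum_mul_adjacency_tripodTriangle_add (N : ℕ) (x : ℕ → ℝ) :
    ∑ i ∈ range (2 * N + 5), x i * adjacency (tripodTriangleEdges N) x i +
        (γ + γ⁻¹) * ∑ i ∈ range (2 * N + 5), x i ^ 2 =
      γ⁻¹ * (x 0 ^ 2 + ∑ i ∈ range N, (γ * x i + x (i + 1)) ^ 2) +
      γ⁻¹ * (∑ i ∈ range N, (x (N + i) + γ * x (N + i + 1)) ^ 2 + x (N + N) ^ 2) +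
      (γ - γ⁻¹) * (x N + (γ + γ⁻¹) * x (2 * N + 1)) ^ 2 +
      ((x (2 * N + 2) + x (2 * N + 3) + x (2 * N + 4)) ^ 2 +
        (γ + γ⁻¹ - 1) * (x (2 * N + 2) ^ 2 + x (2 * N + 3) ^ 2 + x (2 * N + 4) ^ 2)) := by
  have hγ : γ ≠ 0 := by linarith [one_lt_sqrtGoldenRatio]
  set g : ℕ → ℝ := fun i => x i * x (i + 1) + x (i + 1) * x i
  have hleft : ∑ i ∈ range N, g i + (γ + γ⁻¹) * ∑ i ∈ range N, x i ^ 2 + γ⁻¹ * x N ^ 2 =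
      γ⁻¹ * (x 0 ^ 2 + ∑ i ∈ range N, (γ * x i + x (i + 1)) ^ 2) := by
    rw [← sum_range_path_eq_leaf hγ x N, mul_sum, ← sum_add_distrib]
    exact congrArg (· + _) (sum_congr rfl fun i _ => by ring)
  have hright : ∑ i ∈ range N, g (N + i) + (γ + γ⁻¹) * ∑ i ∈ range N, x (N + i + 1) ^ 2 +
      γ⁻¹ * x N ^ 2 =
      γ⁻¹ * (∑ i ∈ range N, (x (N + i) + γ * x (N + i + 1)) ^ 2 + x (N + N) ^ 2) := by
    have harm := sum_range_path_eq_root hγ (fun i => x (N + i)) N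
    simp only [← add_assoc, add_zero] at harm
    rw [← harm, mul_sum, ← sum_add_distrib]
    exact congrArg (· + _) (sum_congr rfl fun i _ => by ring)
  have hpath : ∑ i ∈ range (2 * N), g i = ∑ i ∈ range N, g i + ∑ i ∈ range N, g (N + i) := by
    rw [two_mul, sum_range_add]
  have hdiag : ∑ i ∈ range (2 * N + 5), x i ^ 2 = ∑ i ∈ range N, x i ^ 2 + x N ^ 2 +
      ∑ i ∈ range N, x (N + i + 1) ^ 2 + x (2 * N + 1) ^ 2 + x (2 * N + 2) ^ 2 +
      x (2 * N + 3) ^ 2 + x (2 * N + 4) ^ 2 := by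
    rw [show 2 * N + 5 = N + (N + 1) + 4 by ring, sum_range_add, sum_range_add,
      sum_range_succ' (fun i => x (N + i) ^ 2)]
    simp only [sum_range_succ, sum_range_zero]
    ring_nf
  rw [sum_mul_adjacency (tripodTriangleEdges_lt N), sum_tripodTriangleEdges, hpath, hdiag]
  linear_combination hleft + hright -
    (2 * x N * x (2 * N + 1) + (γ + γ⁻¹) * x (2 * N + 1) ^ 2) * sqrtGoldenRatio_sub_inv_mul_add_inv

theorem neg_mul_sum_sq_le_tripodTriangle (N : ℕ) (x : ℕ → ℝ) :
    -(γ + γ⁻¹) * ∑ i ∈ range (2 * N + 5), x i ^ 2 ≤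
      ∑ i ∈ range (2 * N + 5), x i * adjacency (tripodTriangleEdges N) x i := by
  have hγ := one_lt_sqrtGoldenRatio
  have hγinv : γ⁻¹ < 1 := inv_lt_one_of_one_lt₀ hγ
  have hγinv' : 0 < γ⁻¹ := by positivity
  rw [neg_mul, neg_le_iff_add_nonneg, sum_mul_adjacency_tripodTriangle_add]
  refine add_nonneg (add_nonneg (add_nonneg (by positivity) (by positivity))
    (mul_nonneg (by linarith) (sq_nonneg _)))
    (add_nonneg (sq_nonneg _) (mul_nonneg (by linarith) (by positivity)))

/-- Makes every square in `sum_mul_adjacency_tripodTriangle_add` vanish except those at the two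
leaves `0` and `2N` of the path. -/
noncomputable def tripodTestVector (N v : ℕ) : ℝ :=
  if v ≤ N then (-γ⁻¹) ^ (N - v) else if v ≤ 2 * N then (-γ⁻¹) ^ (v - N)
  else if v = 2 * N + 1 then -(γ + γ⁻¹)⁻¹ else 0

theorem tripodTestVector_of_le {N v : ℕ} (hv : v ≤ N) : tripodTestVector N v = (-γ⁻¹) ^ (N - v) :=
  if_pos hv

theorem tripodTestVector_add {N i : ℕ} (hi : i ≤ N) : tripodTestVector N (N + i) = (-γ⁻¹) ^ i := by
  rcases Nat.eq_zero_or_pos i with rfl | hi0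
  · simp [tripodTestVector]
  · rw [tripodTestVector, if_neg (by omega), if_pos (by omega), Nat.add_sub_cancel_left]

theorem sum_mul_adjacency_tripodTestVector_add (N : ℕ) :
    ∑ i ∈ range (2 * N + 5), tripodTestVector N i *
        adjacency (tripodTriangleEdges N) (tripodTestVector N) i +
      (γ + γ⁻¹) * ∑ i ∈ range (2 * N + 5), tripodTestVector N i ^ 2 =
      2 * γ⁻¹ * (γ⁻¹ ^ 2) ^ N := by
  have hγ : γ ≠ 0 := by linarith [one_lt_sqrtGoldenRatio]
  have hθ : γ + γ⁻¹ ≠ 0 := by have := one_lt_sqrtGoldenRatio; positivity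
  have hleft : ∀ i ∈ range N, (γ * tripodTestVector N i + tripodTestVector N (i + 1)) ^ 2 = 0 := by
    intro i hi
    rw [mem_range] at hi
    rw [pow_eq_zero_iff two_ne_zero, tripodTestVector_of_le (by omega),
      tripodTestVector_of_le (by omega), show N - i = N - (i + 1) + 1 by omega, pow_succ]
    linear_combination -(-γ⁻¹) ^ (N - (i + 1)) * mul_inv_cancel₀ hγ
  have hright : ∀ i ∈ range N,
      (tripodTestVector N (N + i) + γ * tripodTestVector N (N + i + 1)) ^ 2 = 0 := by
    intro i hi
    rw [mem_range] at hi
    rw [pow_eq_zero_iff two_ne_zero, tripodTestVector_add (by omega), add_assoc,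
      tripodTestVector_add (by omega), pow_succ]
    linear_combination -(-γ⁻¹) ^ i * mul_inv_cancel₀ hγ
  have hpendant : tripodTestVector N (2 * N + 1) = -(γ + γ⁻¹)⁻¹ := by
    rw [tripodTestVector, if_neg (by omega), if_neg (by omega), if_pos rfl]
  have htriangle (j : ℕ) : tripodTestVector N (2 * N + 2 + j) = 0 := by
    rw [tripodTestVector, if_neg (by omega), if_neg (by omega), if_neg (by omega)]
  rw [sum_mul_adjacency_tripodTriangle_add, sum_eq_zero hleft, sum_eq_zero hright, hpendant,
    tripodTestVector_of_le (Nat.zero_le N), tripodTestVector_add le_rfl,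
    tripodTestVector_of_le le_rfl, htriangle 0, htriangle 1, htriangle 2, Nat.sub_zero,
    Nat.sub_self, ← pow_mul, mul_comm N 2, pow_mul, neg_sq]
  field_simp
  ring

namespace IsLeastAdjEigenvalue

variable {N : ℕ} {lam : ℝ}

theorem neg_le_of_tripodTriangle
    (h : IsLeastAdjEigenvalue (2 * N + 5) (tripodTriangleEdges N) lam) :
    -(γ + γ⁻¹) ≤ lam :=
  h.le_of_forall_mul_sum_sq_le (neg_mul_sum_sq_le_tripodTriangle N)

theorem le_of_tripodTriangle
    (h : IsLeastAdjEigenvalue (2 * N + 5) (tripodTriangleEdges N) lam) :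
    lam ≤ -(γ + γ⁻¹) + 2 * γ⁻¹ * (γ⁻¹ ^ 2) ^ N := by
  set S := ∑ i ∈ range (2 * N + 5), tripodTestVector N i ^ 2
  have hS : 1 ≤ S := by
    have := single_le_sum (f := fun i => tripodTestVector N i ^ 2) (fun i _ => sq_nonneg _)
      (mem_range.2 (by omega : N < 2 * N + 5))
    simpa [tripodTestVector_of_le] using this
  have hε : 0 ≤ 2 * γ⁻¹ * (γ⁻¹ ^ 2) ^ N := by have := one_lt_sqrtGoldenRatio; positivity
  have := h.mul_sum_sq_le (tripodTestVector N)
  have := sum_mul_adjacency_tripodTestVector_add N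
  nlinarith

end IsLeastAdjEigenvalue

theorem tendsto_of_isLeastAdjEigenvalue_tripodTriangle {lam : ℕ → ℝ}
    (h : ∀ N, IsLeastAdjEigenvalue (2 * N + 5) (tripodTriangleEdges N) (lam N)) :
    Filter.Tendsto lam Filter.atTop (nhds (-(γ + γ⁻¹))) := by
  have hγ := one_lt_sqrtGoldenRatio
  have hpow : Filter.Tendsto (fun N : ℕ => (γ⁻¹ ^ 2) ^ N) Filter.atTop (nhds 0) :=
    tendsto_pow_atTop_nhds_zero_of_lt_one (by positivity)
      (pow_lt_one₀ (by positivity) (inv_lt_one_of_one_lt₀ hγ) two_ne_zero)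
  have hupper := (hpow.const_mul (2 * γ⁻¹)).const_add (-(γ + γ⁻¹))
  rw [mul_zero, add_zero] at hupper
  exact tendsto_of_tendsto_of_tendsto_of_le_of_le tendsto_const_nhds hupper
    (fun N => (h N).neg_le_of_tripodTriangle) (fun N => (h N).le_of_tripodTriangle)

/-- for even `k ≥ 4`, `-√(2+√5)` is a limit point of the least adjacency
H-eigenvalues of non-odd-bipartite `k`-uniform hypergraphs. -/
theorem stmt19 (k : ℕ) (hk : 4 ≤ k) (hke : Even k) :
    ∃ (H : ℕ → UniformHypergraph k) (lam : ℕ → ℝ),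
      (∀ n : ℕ, ¬ (H n).OddBipartite ∧ (H n).IsAdjHEig (lam n) ∧
        ∀ μ : ℝ, (H n).IsAdjHEig μ → lam n ≤ μ) ∧
      Filter.Tendsto lam Filter.atTop (nhds (-Real.sqrt (2 + Real.sqrt 5))) := by
  obtain ⟨q, rfl⟩ := hke
  have hq : 0 < q := by omega
  choose lam hlam using fun N =>
    exists_isLeastAdjEigenvalue (Nat.succ_pos (2 * N + 4)) (tripodTriangleEdges_lt N)
  refine ⟨fun N => powerHypergraph q _ _ (tripodTriangleEdges_lt N), lam,
    fun N => ⟨?_, ?_, fun μ hμ => (hlam N).le_of_isAdjHEig_powerHypergraph hq (by omega) _ hμ⟩,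
    sqrt_two_add_sqrt_five ▸ tendsto_of_isLeastAdjEigenvalue_tripodTriangle hlam⟩
  · exact not_oddBipartite_powerHypergraph _ (a := 2 * N + 2) (b := 2 * N + 3) (c := 2 * N + 4)
      (by simp [tripodTriangleEdges]) (by simp [tripodTriangleEdges])
      (by simp [tripodTriangleEdges])
  · obtain ⟨s, hs, heig⟩ := (hlam N).exists_eigenvector
    exact isAdjHEig_powerHypergraph hq _ hs heig
end
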